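/- With the frequency distribution of length-n factors of the Fibonacci word as above (probabilities τᵏ, τ^{k−1}, τ^{k−2} with multiplicities n−f_{k−1}+1, n−f_{k−2}+1, f_k−n−1 for f_{k−1} ≤ n ≤ f_k−1), the Shannon entropy S(n) = −Σ ν log ν satisfies S(n) = log n + Θ(1); in particular there exist constants c₁, c₂ such that log n + c₁ ≤ S(n) ≤ log n + c₂ for all sufficiently large n. -/

import Mathlib

/-- The entanglement entropy of a length-n region of the Fibonacci code state,
for the unique k with f_{k−1} ≤ n ≤ f_k − 1 (f_j = Nat.fib (j+1)),
computed from the factor-frequency distribution. -/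
noncomputable def fibEntropy (n k : ℕ) : ℝ :=
  let τ : ℝ := (Real.sqrt 5 - 1) / 2
  (((n : ℝ) - Nat.fib k + 1) * k * τ ^ k
      + ((n : ℝ) - Nat.fib (k - 1) + 1) * (k - 1 : ℝ) * τ ^ (k - 1)
      + ((Nat.fib (k + 1) : ℝ) - n - 1) * (k - 2 : ℝ) * τ ^ (k - 2))
    * Real.log (1 / τ)

/-!
With `τ = φ⁻¹`, the normalisation `τ² = 1 - τ` together with `f_{k+1} + τ f_k = φ^k` shows that
the factor frequencies sum to one. Hence `S(n) / log φ = k - a - 2b`, where `a` and `b` are each a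
multiplicity `≤ f_j` times `τ^j`, so lie in `[0, 1]` since `f_j ≤ φ^j`; thus
`S(n) = k log φ + O(1)`. On the other hand `φ^{j-1} ≤ f_j ≤ φ^j` and `f_{k-1} ≤ n < f_k` give
`log n = k log φ + O(1)`.
-/

open Real
open scoped goldenRatio

namespace Real

theorem inv_goldenRatio_eq : φ⁻¹ = (√5 - 1) / 2 := by
  rw [inv_goldenRatio]; ring

theorem inv_goldenRatio_sq : φ⁻¹ ^ 2 = 1 - φ⁻¹ := by
  rw [inv_goldenRatio, neg_sq, goldenConj_sq]; ring

theorem fib_succ_add_inv_goldenRatio_mul_fib (n : ℕ) :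
    (Nat.fib (n + 1) : ℝ) + φ⁻¹ * Nat.fib n = φ ^ n := by
  rw [inv_goldenRatio, ← fib_succ_sub_goldenConj_mul_fib]; ring

theorem fib_succ_le_goldenRatio_pow (n : ℕ) : (Nat.fib (n + 1) : ℝ) ≤ φ ^ n := by
  rw [← fib_succ_add_inv_goldenRatio_mul_fib]
  have : 0 ≤ φ⁻¹ := inv_nonneg.2 goldenRatio_pos.le
  linarith [mul_nonneg this (Nat.cast_nonneg (α := ℝ) (Nat.fib n))]

theorem goldenRatio_pow_le_fib_add_two (n : ℕ) : φ ^ n ≤ Nat.fib (n + 2) := by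
  rw [← fib_succ_add_inv_goldenRatio_mul_fib, Nat.fib_add_two, Nat.cast_add,
    add_comm (Nat.fib n : ℝ)]
  gcongr
  exact mul_le_of_le_one_left (Nat.cast_nonneg _) (inv_le_one_of_one_le₀ one_lt_goldenRatio.le)

theorem mul_inv_goldenRatio_pow_le_one {x : ℝ} {n : ℕ} (hx : x ≤ Nat.fib (n + 1)) :
    x * φ⁻¹ ^ n ≤ 1 := by
  rw [inv_pow, ← div_eq_mul_inv, div_le_one (by positivity)]
  exact hx.trans (fib_succ_le_goldenRatio_pow n)

end Real

theorem fib_factor_frequencies_sum (x : ℝ) (m : ℕ) :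
    (x - Nat.fib (m + 2) + 1) * φ⁻¹ ^ (m + 2) + (x - Nat.fib (m + 1) + 1) * φ⁻¹ ^ (m + 1)
      + (Nat.fib (m + 3) - x - 1) * φ⁻¹ ^ m = 1 := by
  have h₃ : (Nat.fib (m + 3) : ℝ) = Nat.fib (m + 1) + Nat.fib (m + 2) := by
    exact_mod_cast Nat.fib_add_two
  have h₂ : (Nat.fib (m + 2) : ℝ) = Nat.fib m + Nat.fib (m + 1) := by
    exact_mod_cast Nat.fib_add_two
  have hpow : φ⁻¹ ^ m * φ ^ m = 1 := by
    rw [← mul_pow, inv_mul_cancel₀ goldenRatio_ne_zero, one_pow]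
  linear_combination (x - Nat.fib (m + 2) + 1) * φ⁻¹ ^ m * inv_goldenRatio_sq + φ⁻¹ ^ m * h₃
    + φ⁻¹ ^ (m + 1) * h₂ + φ⁻¹ ^ m * fib_succ_add_inv_goldenRatio_mul_fib m + hpow

theorem fibEntropy_eq (n m : ℕ) :
    fibEntropy n (m + 2) = (m + 2 - (n - Nat.fib (m + 1) + 1) * φ⁻¹ ^ (m + 1)
      - 2 * (Nat.fib (m + 3) - n - 1) * φ⁻¹ ^ m) * log φ := by
  simp only [fibEntropy, ← inv_goldenRatio_eq, one_div, inv_inv, Nat.add_sub_cancel,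
    show m + 2 - 1 = m + 1 by omega]
  push_cast
  linear_combination ((m : ℝ) + 2) * log φ * fib_factor_frequencies_sum n m

theorem fibEntropy_mem_Icc {n m : ℕ} (hlo : Nat.fib (m + 2) ≤ n)
    (hhi : n + 1 ≤ Nat.fib (m + 3)) :
    fibEntropy n (m + 2) ∈ Set.Icc ((m - 1) * log φ) ((m + 2) * log φ) := by
  have hloR : (Nat.fib (m + 2) : ℝ) ≤ n := by exact_mod_cast hlo
  have hhiR : (n : ℝ) + 1 ≤ Nat.fib (m + 3) := by exact_mod_cast hhi
  have h₃ : (Nat.fib (m + 3) : ℝ) = Nat.fib (m + 1) + Nat.fib (m + 2) := by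
    exact_mod_cast Nat.fib_add_two
  have hb₀ : 0 ≤ ((n : ℝ) - Nat.fib (m + 1) + 1) * φ⁻¹ ^ (m + 1) := by
    have : (Nat.fib (m + 1) : ℝ) ≤ Nat.fib (m + 2) := by exact_mod_cast Nat.fib_le_fib_succ
    exact mul_nonneg (by linarith) (by positivity)
  have hb₁ := mul_inv_goldenRatio_pow_le_one (x := (n : ℝ) - Nat.fib (m + 1) + 1) (n := m + 1)
    (by linarith)
  have hc₀ : 0 ≤ ((Nat.fib (m + 3) : ℝ) - n - 1) * φ⁻¹ ^ m :=
    mul_nonneg (by linarith) (by positivity)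
  have hc₁ := mul_inv_goldenRatio_pow_le_one (x := (Nat.fib (m + 3) : ℝ) - n - 1) (n := m)
    (by linarith)
  rw [fibEntropy_eq]
  have hlog : 0 ≤ log φ := (log_pos one_lt_goldenRatio).le
  exact ⟨mul_le_mul_of_nonneg_right (by linarith) hlog,
    mul_le_mul_of_nonneg_right (by linarith) hlog⟩

theorem log_mem_Icc_of_fib_le {x : ℝ} {m : ℕ} (hlo : Nat.fib (m + 2) ≤ x)
    (hhi : x ≤ Nat.fib (m + 3)) : log x ∈ Set.Icc (m * log φ) ((m + 2) * log φ) := by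
  have hφm := goldenRatio_pow_le_fib_add_two m
  have hx : 0 < x := (pow_pos goldenRatio_pos m).trans_le (hφm.trans hlo)
  constructor
  · rw [← log_pow]
    exact log_le_log (by positivity) (hφm.trans hlo)
  · rw [show ((m : ℝ) + 2) = ((m + 2 : ℕ) : ℝ) by push_cast; ring, ← log_pow]
    exact log_le_log hx (hhi.trans (fib_succ_le_goldenRatio_pow (m + 2)))

/-- S(n) = log n + Θ(1): there are constants c₁, c₂ with
log n + c₁ ≤ S(n) ≤ log n + c₂ for all sufficiently large n. -/
theorem fib_entropy_log_asymptotics :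
    ∃ c₁ c₂ : ℝ, ∃ N : ℕ, ∀ n ≥ N, ∀ k : ℕ, 2 ≤ k →
      Nat.fib k ≤ n → n ≤ Nat.fib (k + 1) - 1 →
      Real.log n + c₁ ≤ fibEntropy n k ∧ fibEntropy n k ≤ Real.log n + c₂ := by
  refine ⟨-3 * log φ, 2 * log φ, 0, fun n _ k hk hlo hhi ↦ ?_⟩
  obtain ⟨m, rfl⟩ : ∃ m, k = m + 2 := ⟨k - 2, by omega⟩
  have hhi' : n + 1 ≤ Nat.fib (m + 3) := by
    have : 0 < Nat.fib (m + 2 + 1) := Nat.fib_pos.2 (by omega)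
    change n + 1 ≤ Nat.fib (m + 2 + 1)
    omega
  obtain ⟨hS₁, hS₂⟩ := fibEntropy_mem_Icc hlo hhi'
  obtain ⟨hL₁, hL₂⟩ := log_mem_Icc_of_fib_le (x := n) (m := m) (by exact_mod_cast hlo)
    (by exact_mod_cast (Nat.le_succ n).trans hhi')
  constructor <;> linarith
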